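/- arXiv:2201.01059 — 2 statements merged into one kernel-verified Lean document; each statement's English description precedes it below -/
import Mathlib

section
/- Small-gain theorem for BIBO-stability (Theorem 5 of the paper): Let 1 ≤ p, q ≤ ∞, let M > 0, L > 0 and 0 < δ < 1. Suppose Δ : [0,∞) × ℝⁿ → ℝᵐ satisfies |Δ(t,x)|_p ≤ |x|_q for all t ≥ 0 whenever |x|_q > M, and |Δ(t,x)|_p ≤ L for all t ≥ 0 whenever |x|_q ≤ M. Let G be a linear map from bounded ℝᵐ-valued signals on [0,∞) to bounded ℝⁿ-valued signals such that sup_{t≥0} |(Gw)(t)|_q ≤ (1−δ)·sup_{t≥0} |w(t)|_p for every bounded signal w. If bounded signals v, w, e, f satisfy v = G w + f and w(t) = Δ(t, v(t)) + e(t) for all t ≥ 0, then δ·sup_{t≥0}|v(t)|_q ≤ (1−δ)·sup_{t≥0}|e(t)|_p + sup_{t≥0}|f(t)|_q + (1−δ)·L, and sup_{t≥0}|w(t)|_p ≤ L + sup_{t≥0}|v(t)|_q + sup_{t≥0}|e(t)|_p. In particular, sup_t|v(t)|_q + sup_t|w(t)|_p ≤ k₁·(sup_t|e(t)|_p + sup_t|f(t)|_q)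 + k₂ for constants k₁, k₂ depending only on δ and L. -/
open scoped ENNReal

/-- **Small-gain theorem for BIBO-stability** (Theorem 5). -/
theorem small_gain_BIBO
    (n m : ℕ) (p q : ℝ≥0∞) [Fact (1 ≤ p)] [Fact (1 ≤ q)]
    (M L δ : ℝ) (hM : 0 < M) (hL : 0 < L) (hδ0 : 0 < δ) (hδ1 : δ < 1)
    (Δ : ℝ → PiLp q (fun _ : Fin n => ℝ) → PiLp p (fun _ : Fin m => ℝ))
    (hΔ1 : ∀ t, 0 ≤ t → ∀ x, M < ‖x‖ → ‖Δ t x‖ ≤ ‖x‖)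
    (hΔ2 : ∀ t, 0 ≤ t → ∀ x, ‖x‖ ≤ M → ‖Δ t x‖ ≤ L)
    (G : ({t : ℝ // 0 ≤ t} → PiLp p (fun _ : Fin m => ℝ)) →ₗ[ℝ]
         ({t : ℝ // 0 ≤ t} → PiLp q (fun _ : Fin n => ℝ)))
    (hG : ∀ w : {t : ℝ // 0 ≤ t} → PiLp p (fun _ : Fin m => ℝ),
        BddAbove (Set.range fun t => ‖w t‖) →
        (⨆ t, ‖G w t‖) ≤ (1 - δ) * ⨆ t, ‖w t‖)
    (v f : {t : ℝ // 0 ≤ t} → PiLp q (fun _ : Fin n => ℝ))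
    (w e : {t : ℝ // 0 ≤ t} → PiLp p (fun _ : Fin m => ℝ))
    (hv : BddAbove (Set.range fun t => ‖v t‖))
    (hw : BddAbove (Set.range fun t => ‖w t‖))
    (he : BddAbove (Set.range fun t => ‖e t‖))
    (hf : BddAbove (Set.range fun t => ‖f t‖))
    (hloop1 : v = G w + f)
    (hloop2 : ∀ t, w t = Δ t.1 (v t) + e t) :
    δ * (⨆ t, ‖v t‖) ≤ (1 - δ) * (⨆ t, ‖e t‖) + (⨆ t, ‖f t‖) + (1 - δ) * L ∧
    (⨆ t, ‖w t‖) ≤ L + (⨆ t, ‖v t‖) + (⨆ t, ‖e t‖) ∧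
    ∃ k₁ k₂ : ℝ, 0 < k₁ ∧ 0 < k₂ ∧
      (⨆ t, ‖v t‖) + (⨆ t, ‖w t‖) ≤ k₁ * ((⨆ t, ‖e t‖) + (⨆ t, ‖f t‖)) + k₂ := by
  have hne : Nonempty {t : ℝ // 0 ≤ t} := ⟨⟨0, le_rfl⟩⟩
  set V := ⨆ t, ‖v t‖ with hVdef
  set W := ⨆ t, ‖w t‖ with hWdef
  set E := ⨆ t, ‖e t‖ with hEdef
  set F := ⨆ t, ‖f t‖ with hFdef
  have hE0 : 0 ≤ E := Real.iSup_nonneg fun t => norm_nonneg _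
  have hF0 : 0 ≤ F := Real.iSup_nonneg fun t => norm_nonneg _
  have hV0 : 0 ≤ V := Real.iSup_nonneg fun t => norm_nonneg _
  have hvle : ∀ t, ‖v t‖ ≤ V := fun t => le_ciSup hv t
  have hele : ∀ t, ‖e t‖ ≤ E := fun t => le_ciSup he t
  have hfle : ∀ t, ‖f t‖ ≤ F := fun t => le_ciSup hf t
  have hΔle : ∀ t : {t : ℝ // 0 ≤ t}, ‖Δ t.1 (v t)‖ ≤ ‖v t‖ + L := by
    intro t
    rcases le_or_gt ‖v t‖ M with h | h
    · have := hΔ2 t.1 t.2 (v t) h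
      linarith [norm_nonneg (v t)]
    · have := hΔ1 t.1 t.2 (v t) h
      linarith
  -- second claim
  have hW : W ≤ L + V + E := by
    apply ciSup_le
    intro t
    rw [hloop2 t]
    calc ‖Δ t.1 (v t) + e t‖ ≤ ‖Δ t.1 (v t)‖ + ‖e t‖ := norm_add_le _ _
      _ ≤ (‖v t‖ + L) + E := add_le_add (hΔle t) (hele t)
      _ ≤ L + V + E := by linarith [hvle t]
  -- Gw = v - f is bounded
  have hGweq : ∀ t, G w t = v t - f t := by
    intro t
    have := congrFun hloop1 t
    simp only [Pi.add_apply] at this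
    rw [this]; abel
  have hGwbdd : BddAbove (Set.range fun t => ‖G w t‖) := by
    refine ⟨V + F, ?_⟩
    rintro x ⟨t, rfl⟩
    show ‖G w t‖ ≤ V + F
    rw [hGweq t]
    calc ‖v t - f t‖ ≤ ‖v t‖ + ‖f t‖ := norm_sub_le _ _
      _ ≤ V + F := add_le_add (hvle t) (hfle t)
  have hGwle : ∀ t, ‖G w t‖ ≤ (1 - δ) * W := fun t =>
    (le_ciSup hGwbdd t).trans (hG w hw)
  have hVle : V ≤ (1 - δ) * W + F := by
    apply ciSup_le
    intro t
    have : v t = G w t + f t := by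
      have := congrFun hloop1 t
      simpa using this
    rw [this]
    calc ‖G w t + f t‖ ≤ ‖G w t‖ + ‖f t‖ := norm_add_le _ _
      _ ≤ (1 - δ) * W + F := add_le_add (hGwle t) (hfle t)
  have h1δ : (0:ℝ) ≤ 1 - δ := by linarith
  have key : δ * V ≤ (1 - δ) * E + F + (1 - δ) * L := by
    have h1 : (1 - δ) * W ≤ (1 - δ) * (L + V + E) :=
      mul_le_mul_of_nonneg_left hW h1δ
    nlinarith
  refine ⟨key, hW, 2 / δ + 1, 2 * (1 - δ) * L / δ + L, by positivity, by positivity, ?_⟩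
  have hgoal : δ * (V + W) ≤ δ * ((2 / δ + 1) * (E + F) + (2 * (1 - δ) * L / δ + L)) := by
    have hδne : δ ≠ 0 := ne_of_gt hδ0
    have hrw : δ * ((2 / δ + 1) * (E + F) + (2 * (1 - δ) * L / δ + L))
        = (2 + δ) * (E + F) + (2 * (1 - δ) * L + δ * L) := by
      field_simp
    rw [hrw]
    have h2 : δ * W ≤ δ * (L + V + E) := mul_le_mul_of_nonneg_left hW hδ0.le
    nlinarith
  exact le_of_mul_le_mul_left hgoal hδ0
end

section
/- Volterra small-gain bound (analytic core of Theorem 1 on BIBO-stability of the nonlinear closed loop): let g : [0,∞) → ℝ be integrable with ρ := ∫₀^∞ |g(s)| ds, let r > 0 and k ≥ 0 satisfy r·ρ < 1, and let φ : [0,∞) × ℝ → ℝ be continuous with |φ(s,u)| ≤ r·|u| + k for all s ≥ 0 and u ∈ ℝ. Let h : [0,∞) → ℝ be bounded with H := sup_{t≥0} |h(t)|, and suppose q : [0,∞) → ℝ is continuous and satisfies the Volterra equation q(t) = h(t) + ∫₀ᵗ g(t−s)·φ(s, q(s)) ds for all t ≥ 0. Then q is bounded, with sup_{t≥0} |q(t)|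 ≤ (H + k·ρ)/(1 − r·ρ). -/
open MeasureTheory

/-- Volterra small-gain bound (analytic core of Theorem 1): if the impulse response
`g` has `L¹`-norm `ρ` with `r·ρ < 1`, the nonlinearity satisfies `|φ(s,u)| ≤ r|u| + k`,
`|h| ≤ H` on `[0,∞)`, and the continuous function `q` solves the Volterra equation
`q(t) = h(t) + ∫₀ᵗ g(t-s) φ(s, q(s)) ds`, then
`|q(t)| ≤ (H + kρ)/(1 - rρ)` for all `t ≥ 0`. -/
theorem volterra_small_gain_bound
    (g : ℝ → ℝ) (hg : IntegrableOn g (Set.Ici 0))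
    (ρ : ℝ) (hρ : ρ = ∫ s in Set.Ici (0:ℝ), |g s|)
    (r k : ℝ) (hr : 0 < r) (hk : 0 ≤ k) (hrρ : r * ρ < 1)
    (φ : ℝ → ℝ → ℝ) (hφc : Continuous fun u : ℝ × ℝ => φ u.1 u.2)
    (hφ : ∀ s, 0 ≤ s → ∀ u : ℝ, |φ s u| ≤ r * |u| + k)
    (h : ℝ → ℝ) (H : ℝ) (hH : ∀ t, 0 ≤ t → |h t| ≤ H)
    (q : ℝ → ℝ) (hq : Continuous q)
    (heq : ∀ t, 0 ≤ t → q t = h t + ∫ s in (0:ℝ)..t, g (t - s) * φ s (q s)) :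
    ∀ t, 0 ≤ t → |q t| ≤ (H + k * ρ) / (1 - r * ρ) := by
  intro t ht
  have hρ0 : 0 ≤ ρ := by
    rw [hρ]; exact integral_nonneg fun s => abs_nonneg _
  have h1ρ : 0 < 1 - r * ρ := by linarith
  -- maximum of |q| on [0, t]
  obtain ⟨τ, hτmem, hτmax⟩ := (isCompact_Icc : IsCompact (Set.Icc (0:ℝ) t)).exists_isMaxOn
    ⟨0, le_refl 0, ht⟩ (hq.abs.continuousOn)
  set M := |q τ| with hM
  have hMq : ∀ s ∈ Set.Icc (0:ℝ) t, |q s| ≤ M := fun s hs => hτmax hs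
  have hM0 : 0 ≤ M := abs_nonneg _
  have hτ0 : 0 ≤ τ := hτmem.1
  have hrMk : 0 ≤ r * M + k := by positivity
  -- integrability facts
  have hgτ : IntervalIntegrable (fun s => g (τ - s)) volume 0 τ := by
    have h1 : IntervalIntegrable g volume 0 τ := by
      apply MeasureTheory.IntegrableOn.intervalIntegrable
      apply hg.mono_set
      rw [Set.uIcc_of_le hτ0]
      exact fun x hx => hx.1
    simpa using h1.comp_sub_left τ |>.symm
  have hcont : Continuous fun s => φ s (q s) := hφc.comp (continuous_id.prodMk hq)
  have hprod : IntervalIntegrable (fun s => g (τ - s) * φ s (q s)) volume 0 τ :=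
    hgτ.mul_continuousOn hcont.continuousOn
  -- key bound: M ≤ H + (r*M + k)*ρ
  have key : M ≤ H + (r * M + k) * ρ := by
    have hq' := heq τ hτ0
    have h1 : |∫ s in (0:ℝ)..τ, g (τ - s) * φ s (q s)|
        ≤ ∫ s in (0:ℝ)..τ, |g (τ - s) * φ s (q s)| :=
      intervalIntegral.abs_integral_le_integral_abs hτ0
    have h2 : (∫ s in (0:ℝ)..τ, |g (τ - s) * φ s (q s)|)
        ≤ ∫ s in (0:ℝ)..τ, |g (τ - s)| * (r * M + k) := by
      apply intervalIntegral.integral_mono_on hτ0 hprod.abs (hgτ.abs.mul_const _)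
      intro s hs
      rw [abs_mul]
      apply mul_le_mul_of_nonneg_left _ (abs_nonneg _)
      calc |φ s (q s)| ≤ r * |q s| + k := hφ s hs.1 _
        _ ≤ r * M + k := by
            have : |q s| ≤ M := hMq s ⟨hs.1, hs.2.trans hτmem.2⟩
            nlinarith
    have h3 : (∫ s in (0:ℝ)..τ, |g (τ - s)| * (r * M + k))
        = (∫ s in (0:ℝ)..τ, |g (τ - s)|) * (r * M + k) :=
      intervalIntegral.integral_mul_const _ _
    have h4 : (∫ s in (0:ℝ)..τ, |g (τ - s)|) = ∫ s in (0:ℝ)..τ, |g s| := by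
      have := intervalIntegral.integral_comp_sub_left (fun s => |g s|) (a := 0) (b := τ) τ
      simpa using this
    have h5 : (∫ s in (0:ℝ)..τ, |g s|) ≤ ρ := by
      rw [intervalIntegral.integral_of_le hτ0, hρ]
      apply setIntegral_mono_set hg.abs
      · exact Filter.Eventually.of_forall fun s => abs_nonneg _
      · exact HasSubset.Subset.eventuallyLE (fun x hx => le_of_lt hx.1)
    have h6 : (∫ s in (0:ℝ)..τ, |g (τ - s)|) * (r * M + k) ≤ ρ * (r * M + k) := by
      apply mul_le_mul_of_nonneg_right _ hrMk
      rw [h4]; exact h5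
    calc M = |q τ| := rfl
      _ ≤ |h τ| + |∫ s in (0:ℝ)..τ, g (τ - s) * φ s (q s)| := by rw [hq']; exact abs_add_le _ _
      _ ≤ H + (r * M + k) * ρ := by
          have := hH τ hτ0
          have := h1.trans (h2.trans (h3.le.trans h6))
          linarith [mul_comm ρ (r * M + k)]
  -- conclude
  have hMB : M ≤ (H + k * ρ) / (1 - r * ρ) := by
    rw [le_div_iff₀ h1ρ]
    nlinarith
  exact (hMq t ⟨ht, le_refl t⟩).trans hMB
end
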